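/- One-dimensional reduction: for w ∈ [0,1]^N sorted decreasingly (w₁ ≥ w₂ ≥ … ≥ w_N) with Σwᵢ > 0, the maximum of D(y) = 2⟨y,w⟩/(‖y‖₁+‖w‖₁) over y ∈ {0,1}^N is attained at some prefix vector y^(k) = (1,…,1,0,…,0) with k ones, i.e., max_y D(y) = max_{0≤k≤N} 2(w₁+…+w_k)/(k + Σᵢwᵢ). -/

import Mathlib

open Filter

noncomputable section

/-- Discrete soft-Dice loss `SD(x) = 1 - 2⟨x,w⟩/(‖x‖₁ + ‖w‖₁)`. -/
def SDd {N : ℕ} (w x : Fin N → ℝ) : ℝ :=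
  1 - 2 * (∑ i, x i * w i) / ((∑ i, x i) + (∑ i, w i))

/-- Discrete Dice score `D(y) = 2⟨y,w⟩/(‖y‖₁ + ‖w‖₁)`. -/
def Dd {N : ℕ} (w y : Fin N → ℝ) : ℝ :=
  2 * (∑ i, y i * w i) / ((∑ i, y i) + (∑ i, w i))

/-- The set of soft-Dice values over `[0,1]^N`. -/
def SDdvals {N : ℕ} (w : Fin N → ℝ) : Set ℝ :=
  {v : ℝ | ∃ x : Fin N → ℝ, (∀ i, x i ∈ Set.Icc (0:ℝ) 1) ∧ v = SDd w x}

/-- The set of Dice values over `{0,1}^N`. -/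
def Ddvals {N : ℕ} (w : Fin N → ℝ) : Set ℝ :=
  {v : ℝ | ∃ y : Fin N → ℝ, (∀ i, y i = 0 ∨ y i = 1) ∧ v = Dd w y}

/-!
A 0/1 vector with support `s` has Dice score `2 (∑ i ∈ s, w i) / (#s + ∑ i, w i)`. For a fixed
cardinality `#s` only the numerator depends on `s`, and since `w` is decreasing it is largest on
the first `#s` indices: swapping the indices of `s` beyond the prefix for the missing prefix
indices can only increase it. Hence every score is dominated by that of a prefix vector, and the
best of the `N + 1` prefix vectors dominates all of them.
-/

open Finset

theorem Finset.sum_le_sum_of_card_eq_of_forall_le {ι M : Type*} [AddCommMonoid M] [LinearOrder M]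
    [IsOrderedAddMonoid M] {s t : Finset ι} {f : ι → M} (hcard : #s = #t)
    (hle : ∀ a ∈ s, ∀ b ∈ t, f a ≤ f b) : ∑ a ∈ s, f a ≤ ∑ b ∈ t, f b := by
  rcases s.eq_empty_or_nonempty with rfl | hs
  · rw [card_empty, eq_comm, card_eq_zero] at hcard
    simp [hcard]
  calc ∑ a ∈ s, f a ≤ #s • s.sup' hs f := sum_le_card_nsmul _ _ _ fun a ha => le_sup' f ha
    _ = #t • s.sup' hs f := by rw [hcard]
    _ ≤ ∑ b ∈ t, f b := card_nsmul_le_sum _ _ _ fun b hb => sup'_le hs f fun a ha => hle a ha b hb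

theorem Fin.card_filter_val_lt_card {N : ℕ} (s : Finset (Fin N)) :
    #{i : Fin N | (i : ℕ) < #s} = #s := by
  rw [card_filter_val_lt, min_eq_right (by simpa using card_le_univ s)]

theorem Fin.sum_le_sum_filter_val_lt_card {N : ℕ} {w : Fin N → ℝ} (hw : Antitone w)
    (s : Finset (Fin N)) : ∑ i ∈ s, w i ≤ ∑ i ∈ {i : Fin N | (i : ℕ) < #s}, w i := by
  rw [← sum_sdiff_le_sum_sdiff]
  refine sum_le_sum_of_card_eq_of_forall_le
    (card_sdiff_comm (Fin.card_filter_val_lt_card s).symm) fun a ha b hb => hw ?_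
  simp only [Finset.mem_sdiff, Finset.mem_filter, mem_univ, true_and] at ha hb
  exact Fin.le_of_lt (by omega)

theorem Dd_boole {N : ℕ} (w : Fin N → ℝ) (p : Fin N → Prop) [DecidablePred p] :
    Dd w (fun i => if p i then 1 else 0) = 2 * (∑ i with p i, w i) / (#{i | p i} + ∑ i, w i) := by
  simp [Dd, sum_boole, ite_mul, sum_filter]

theorem sorted_dice_prefix_maximizer_general
    {N : ℕ} (w : Fin N → ℝ)
    (hsort : ∀ i j : Fin N, i ≤ j → w j ≤ w i)
    (hpos : 0 < ∑ i, w i) :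
    ∃ k : ℕ, k ≤ N ∧
      ∀ y : Fin N → ℝ, (∀ i, y i = 0 ∨ y i = 1) →
        Dd w y ≤ Dd w (fun i => if (i : ℕ) < k then (1:ℝ) else 0) := by
  classical
  set prefixDice : ℕ → ℝ := fun k => Dd w (fun i => if (i : ℕ) < k then 1 else 0)
  obtain ⟨k, hk, hmax⟩ := exists_max_image (range (N + 1)) prefixDice ⟨0, by simp⟩
  refine ⟨k, Nat.lt_succ_iff.mp (mem_range.mp hk), fun y hy => ?_⟩
  have hy_boole : y = fun i => if y i = 1 then 1 else 0 := by
    funext i; rcases hy i with h | h <;> rw [h] <;> norm_num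
  set s : Finset (Fin N) := {i | y i = 1}
  have hs : #s ≤ N := (card_le_univ s).trans_eq (Fintype.card_fin N)
  calc Dd w y = 2 * (∑ i ∈ s, w i) / (#s + ∑ i, w i) := by
        rw [congrArg (Dd w) hy_boole, Dd_boole]
    _ ≤ 2 * (∑ i ∈ {i : Fin N | (i : ℕ) < #s}, w i) / (#s + ∑ i, w i) :=
      div_le_div_of_nonneg_right
        (mul_le_mul_of_nonneg_left (Fin.sum_le_sum_filter_val_lt_card hsort s) zero_le_two)
        (add_nonneg (Nat.cast_nonneg _) hpos.le)
    _ = prefixDice #s := by simp only [prefixDice, Dd_boole, Fin.card_filter_val_lt_card]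
    _ ≤ prefixDice k := hmax _ (mem_range.mpr (Nat.lt_succ_of_le hs))

theorem sorted_dice_prefix_maximizer
    {N : ℕ} (hN : 1 ≤ N) (w : Fin N → ℝ)
    (hw : ∀ i, w i ∈ Set.Icc (0:ℝ) 1)
    (hsort : ∀ i j : Fin N, i ≤ j → w j ≤ w i)
    (hpos : 0 < ∑ i, w i) :
    ∃ k : ℕ, k ≤ N ∧
      ∀ y : Fin N → ℝ, (∀ i, y i = 0 ∨ y i = 1) →
        Dd w y ≤ Dd w (fun i => if (i : ℕ) < k then (1:ℝ) else 0) :=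
  sorted_dice_prefix_maximizer_general w hsort hpos
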